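/- arXiv:1204.2703 — 7 statements merged into one kernel-verified Lean document; each statement's English description precedes it below -/
import Mathlib

section
/- Let O be a symmetric operad and P(O) the Lawvere theory of spans associated to O. Every isomorphism n → n in P(O) is represented by a unique span (φ, id_n, (a_i)_{i≤n}) where φ : (n] → (n] is a bijection and each a_i ∈ O_1 is invertible with respect to operadic composition (i.e. there is b_i ∈ O_1 with a_i ∗ b_i = ι = b_i ∗ a_i). -/
/-- One step of the lexicographic decomposition of a sigma of `Fin`s. -/
def finSigmaSucc {k : ℕ} (ns : Fin (k + 1) → ℕ) :
    (Σ i : Fin (k + 1), Fin (ns i)) ≃ (Fin (ns 0) ⊕ Σ i : Fin k, Fin (ns i.succ)) where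
  toFun p := Fin.cases (motive := fun i => Fin (ns i) → Fin (ns 0) ⊕ Σ i : Fin k, Fin (ns i.succ))
      (fun j => Sum.inl j) (fun i j => Sum.inr ⟨i, j⟩) p.1 p.2
  invFun q := q.elim (fun j => ⟨0, j⟩) (fun q => ⟨q.1.succ, q.2⟩)
  left_inv := by rintro ⟨i, j⟩; induction i using Fin.cases <;> simp
  right_inv := by rintro (j | ⟨i, j⟩) <;> simp

/-- The lexicographic identification of `Σ i, Fin (ns i)` with `Fin (∑ i, ns i)`. -/
def finSigma : ∀ {k : ℕ} (ns : Fin k → ℕ), (Σ i : Fin k, Fin (ns i)) ≃ Fin (∑ i, ns i)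
  | 0, ns => (Equiv.equivOfIsEmpty _ _ : (Σ i : Fin 0, Fin (ns i)) ≃ Fin 0).trans
      (finCongr (by simp))
  | k + 1, ns =>
    (finSigmaSucc ns).trans <|
      ((Equiv.refl (Fin (ns 0))).sumCongr (finSigma fun i => ns i.succ)).trans <|
        finSumFinEquiv.trans (finCongr (Fin.sum_univ_succ ns).symm)

/-- Operadic composition of permutations: on the lexicographic block decomposition,
`⟨i, r⟩ ↦ ⟨τ i, σs (τ i) r⟩`. -/
def symComp {k : ℕ} (ns : Fin k → ℕ) (σs : ∀ i, Equiv.Perm (Fin (ns i)))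
    (τ : Equiv.Perm (Fin k)) : Equiv.Perm (Fin (∑ i, ns i)) :=
  (finCongr (Equiv.sum_comp τ ns)).symm.trans <|
    ((finSigma fun i => ns (τ i)).symm.trans
      ((Equiv.sigmaCongr τ fun i => σs (τ i)).trans (finSigma ns)))

/-- A symmetric operad. -/
structure SymOperad where
  ops : ℕ → Type
  unit : ops 1
  comp : ∀ {k : ℕ} (ns : Fin k → ℕ), (∀ i, ops (ns i)) → ops k → ops (∑ i, ns i)
  act : ∀ {n : ℕ}, Equiv.Perm (Fin n) → ops n → ops n
  act_one : ∀ {n : ℕ} (x : ops n), act (Equiv.refl (Fin n)) x = x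
  act_mul : ∀ {n : ℕ} (σ τ : Equiv.Perm (Fin n)) (x : ops n),
    act (σ * τ) x = act σ (act τ x)
  comp_unit_left : ∀ {n : ℕ} (g : ops n),
    HEq (comp (fun _ : Fin n => 1) (fun _ => unit) g) g
  comp_unit_right : ∀ {n : ℕ} (g : ops n),
    HEq (comp (fun _ : Fin 1 => n) (fun _ => g) unit) g
  comp_assoc : ∀ {k : ℕ} (ns : Fin k → ℕ) (ms : ∀ i, Fin (ns i) → ℕ)
    (hs : ∀ i j, ops (ms i j)) (gs : ∀ i, ops (ns i)) (f : ops k),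
    HEq (comp (fun p => ms ((finSigma ns).symm p).1 ((finSigma ns).symm p).2)
          (fun p => hs ((finSigma ns).symm p).1 ((finSigma ns).symm p).2)
          (comp ns gs f))
        (comp (fun i => ∑ j, ms i j) (fun i => comp (ms i) (hs i) (gs i)) f)
  equiv_inner : ∀ {k : ℕ} (ns : Fin k → ℕ) (σs : ∀ i, Equiv.Perm (Fin (ns i)))
    (gs : ∀ i, ops (ns i)) (f : ops k),
    comp ns (fun i => act (σs i) (gs i)) f
      = act (symComp ns σs (Equiv.refl (Fin k))) (comp ns gs f)
  equiv_outer : ∀ {k : ℕ} (ns : Fin k → ℕ) (τ : Equiv.Perm (Fin k))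
    (gs : ∀ i, ops (ns i)) (f : ops k),
    HEq (comp (fun i => ns (τ i)) (fun i => gs (τ i)) (act τ f))
        (act (symComp ns (fun i => Equiv.refl (Fin (ns i))) τ) (comp ns gs f))

/-- Composition `a ∗ b` of unary operations of an operad. -/
def SymOperad.comp1 (O : SymOperad) (a b : O.ops 1) : O.ops 1 :=
  cast (congrArg O.ops (by simp)) (O.comp (fun _ : Fin 1 => 1) (fun _ => a) b)

/-- Composition `⟨c 1, …, c r⟩ ∗ h` of an `r`-ary operation with unary operations. -/
def SymOperad.unaryComp (O : SymOperad) {r : ℕ} (c : Fin r → O.ops 1) (h : O.ops r) :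
    O.ops r :=
  cast (congrArg O.ops (by simp)) (O.comp (fun _ : Fin r => 1) c h)
/-- A Lawvere theory: a category with objects the natural numbers where `n` is the
`n`-fold power of `1` with chosen projections.  `comp f g` is `f` followed by `g`. -/
structure LawTheory where
  Hom : ℕ → ℕ → Type
  id : ∀ n : ℕ, Hom n n
  comp : ∀ {a b c : ℕ}, Hom a b → Hom b c → Hom a c
  id_comp : ∀ {a b : ℕ} (f : Hom a b), comp (id a) f = f
  comp_id : ∀ {a b : ℕ} (f : Hom a b), comp f (id b) = f
  assoc : ∀ {a b c d : ℕ} (f : Hom a b) (g : Hom b c) (h : Hom c d),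
    comp (comp f g) h = comp f (comp g h)
  proj : ∀ (n : ℕ), Fin n → Hom n 1
  tuple : ∀ {a n : ℕ}, (Fin n → Hom a 1) → Hom a n
  tuple_proj : ∀ {a n : ℕ} (fs : Fin n → Hom a 1) (i : Fin n),
    comp (tuple fs) (proj n i) = fs i
  tuple_eta : ∀ {a n : ℕ} (g : Hom a n),
    tuple (fun i => comp g (proj n i)) = g

namespace LawTheory

variable (T : LawTheory)

/-- The structural morphism `π_φ : n → m` induced by a function `φ : (m] → (n]`. -/
def pi {n m : ℕ} (φ : Fin m → Fin n) : T.Hom n m :=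
  T.tuple fun i => T.proj n (φ i)

/-- The product map `f₁ × ⋯ × f_k : ∑ ns i → k` of operations `fs i : ns i → 1`,
formed via the chosen projections and the lexicographic block decomposition. -/
def prodMap {k : ℕ} (ns : Fin k → ℕ) (fs : ∀ i, T.Hom (ns i) 1) :
    T.Hom (∑ i, ns i) k :=
  T.tuple fun i => T.comp (T.pi fun j : Fin (ns i) => finSigma ns ⟨i, j⟩) (fs i)

/-- Operadic composition of the operations of a Lawvere theory:
`⟨f₁,…,f_k⟩ ∗ f = f ∘ (f₁ × ⋯ × f_k)`. -/
def opComp {k : ℕ} (ns : Fin k → ℕ) (fs : ∀ i, T.Hom (ns i) 1) (f : T.Hom k 1) :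
    T.Hom (∑ i, ns i) 1 :=
  T.comp (T.prodMap ns fs) f

/-- The action `σ · f = f ∘ π_σ` of a permutation on an operation. -/
def opAct {n : ℕ} (σ : Equiv.Perm (Fin n)) (f : T.Hom n 1) : T.Hom n 1 :=
  T.comp (T.pi ⇑σ) f

/-- A morphism `f : a → b` is invertible (an isomorphism). -/
def IsInvertible {a b : ℕ} (f : T.Hom a b) : Prop :=
  ∃ g : T.Hom b a, T.comp f g = T.id a ∧ T.comp g f = T.id b

/-- Structural morphisms: the closure under isomorphism of the image of the unique
interpretation from the initial Lawvere theory `𝔽ᵒᵖ`. -/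
def Structural {n m : ℕ} (f : T.Hom n m) : Prop :=
  ∃ (φ : Fin m → Fin n) (u : T.Hom n n) (v : T.Hom m m),
    T.IsInvertible u ∧ T.IsInvertible v ∧ f = T.comp u (T.comp (T.pi φ) v)

/-- `e` is left orthogonal to `m`: unique diagonal fillers exist. -/
def Orthogonal {a b c d : ℕ} (e : T.Hom a b) (m : T.Hom c d) : Prop :=
  ∀ (u : T.Hom a c) (v : T.Hom b d), T.comp u m = T.comp e v →
    ∃! w : T.Hom b c, T.comp e w = u ∧ T.comp w m = v

/-- Analytic morphisms: those right orthogonal to all structural morphisms. -/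
def Analytic {c d : ℕ} (f : T.Hom c d) : Prop :=
  ∀ {a b : ℕ} (e : T.Hom a b), T.Structural e → T.Orthogonal e f

/-- The canonical map `ρ_n : S_n × Aut(1)ⁿ → Hom(n,n)`,
`(σ, a) ↦ (a₁ × ⋯ × a_n) ∘ π_σ`. -/
def rho (n : ℕ)
    (p : Equiv.Perm (Fin n) × (Fin n → {f : T.Hom 1 1 // T.IsInvertible f})) :
    T.Hom n n :=
  T.comp (T.pi ⇑p.1) (T.tuple fun i => T.comp (T.proj n i) (p.2 i).1)

/-- `T` has simple automorphisms: each `ρ_n` is a bijection onto the automorphisms. -/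
def HasSimpleAut : Prop :=
  ∀ n : ℕ, Function.Injective (T.rho n) ∧
    Set.range (T.rho n) = {f : T.Hom n n | T.IsInvertible f}

/-- `T` is an analytic Lawvere theory: structural and analytic morphisms form a
factorization system and `T` has simple automorphisms. -/
def IsAnalyticTheory : Prop :=
  (∀ {n m : ℕ} (f : T.Hom n m), ∃ (k : ℕ) (e : T.Hom n k) (g : T.Hom k m),
      T.Structural e ∧ T.Analytic g ∧ f = T.comp e g) ∧ T.HasSimpleAut

end LawTheory

/-- A morphism of symmetric operads. -/
structure OperadHom (O O' : SymOperad) where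
  map : ∀ n : ℕ, O.ops n → O'.ops n
  map_unit : map 1 O.unit = O'.unit
  map_comp : ∀ {k : ℕ} (ns : Fin k → ℕ) (gs : ∀ i, O.ops (ns i)) (f : O.ops k),
    map _ (O.comp ns gs f) = O'.comp ns (fun i => map _ (gs i)) (map k f)
  map_act : ∀ {n : ℕ} (σ : Equiv.Perm (Fin n)) (x : O.ops n),
    map n (O.act σ x) = O'.act σ (map n x)

/-- An interpretation of Lawvere theories: an identity-on-objects functor
preserving the chosen projections. -/
structure LawHom (T T' : LawTheory) where
  map : ∀ {a b : ℕ}, T.Hom a b → T'.Hom a b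
  map_id : ∀ n : ℕ, map (T.id n) = T'.id n
  map_comp : ∀ {a b c : ℕ} (f : T.Hom a b) (g : T.Hom b c),
    map (T.comp f g) = T'.comp (map f) (map g)
  map_proj : ∀ (n : ℕ) (i : Fin n), map (T.proj n i) = T'.proj n i

/-- `S` is the symmetric operad of operations of the Lawvere theory `T`. -/
def IsOperadOf (T : LawTheory) (S : SymOperad) : Prop :=
  S.ops = (fun n => T.Hom n 1) ∧ HEq S.unit (T.id 1) ∧
    HEq (@SymOperad.comp S) (@LawTheory.opComp T) ∧
    HEq (@SymOperad.act S) (@LawTheory.opAct T)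
/-- A span `(φ, f, (g_i))` with codomain component `1`: an operation of the span
Lawvere theory `P(O)`, given by an arity `r`, a function leg `φ : (r] → (n]` and an
operation `g ∈ O_r`. -/
def PreOp (O : SymOperad) (n : ℕ) : Type := Σ r : ℕ, (Fin r → Fin n) × O.ops r

/-- Equivalence of spans: `(φ, g) ∼ (φ ∘ σ, σ⁻¹ · g)`. -/
def PreRel (O : SymOperad) (n : ℕ) : PreOp O n → PreOp O n → Prop := fun x y =>
  ∃ σ : Equiv.Perm (Fin x.1), y = ⟨x.1, x.2.1 ∘ ⇑σ, O.act σ⁻¹ x.2.2⟩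

/-- Morphism components of the span Lawvere theory: equivalence classes of spans. -/
def SpanOp (O : SymOperad) (n : ℕ) : Type := Quot (PreRel O n)

/-- Composition of spans: pullback of the monotone leg along the function leg
together with operadic composition. -/
def compPre (O : SymOperad) {n m : ℕ} (x : PreOp O m) (y : Fin m → PreOp O n) :
    PreOp O n :=
  ⟨∑ l, (y (x.2.1 l)).1,
   fun p => (y (x.2.1 ((finSigma _).symm p).1)).2.1 ((finSigma _).symm p).2,
   O.comp (fun l => (y (x.2.1 l)).1) (fun l => (y (x.2.1 l)).2.2) x.2.2⟩

/-- An identification of a Lawvere theory `T` with the span Lawvere theory `P(O)`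
of a symmetric operad `O`: morphisms `n → m` are `m`-tuples of equivalence classes
of spans, and identities, projections, tupling and composition are computed by the
span formulas. -/
structure SpanModel (O : SymOperad) (T : LawTheory) where
  e : ∀ {n m : ℕ}, T.Hom n m ≃ (Fin m → SpanOp O n)
  id_eq : ∀ n : ℕ, e (T.id n) = fun i => Quot.mk _ ⟨1, fun _ => i, O.unit⟩
  proj_eq : ∀ (n : ℕ) (i : Fin n),
    e (T.proj n i) = fun _ : Fin 1 => Quot.mk _ ⟨1, fun _ => i, O.unit⟩
  tuple_eq : ∀ {a n : ℕ} (fs : Fin n → T.Hom a 1),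
    e (T.tuple fs) = fun i => e (fs i) 0
  comp_eq : ∀ {n m k : ℕ} (f : T.Hom n m) (g : T.Hom m k)
    (y : Fin m → PreOp O n) (x : Fin k → PreOp O m),
    (∀ i, e f i = Quot.mk _ (y i)) → (∀ j, e g j = Quot.mk _ (x j)) →
    ∀ j, e (T.comp f g) j = Quot.mk _ (compPre O (x j) y)

/-! Invertibility forces every component of `f` and of its inverse `g` to have a one-element
apex: the apex of a component of `f ∘ g` is a disjoint union of apices of components of `f`,
indexed by the apex of a component of `g`, and the identity has one-element apices. A span with
a one-element apex has no nontrivial symmetries, so it is determined by its leg `(1] → (n]` and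
its operation in `O₁`; composing two such spans composes the legs and the operations. Hence the
legs of `f` and `g` are inverse bijections and the operations are inverse in `O₁`. -/

theorem Fin.ne_zero_of_sum_eq_one {k : ℕ} {t : Fin k → ℕ} (h : ∑ l, t l = 1) : k ≠ 0 := by
  rintro rfl; simp at h

theorem Fin.eq_one_of_sum_eq_one {k : ℕ} {t : Fin k → ℕ} (h : ∑ l, t l = 1)
    (ht : ∀ l, t l ≠ 0) : k = 1 := by
  have hk := Fin.ne_zero_of_sum_eq_one h
  have : k ≤ 1 :=
    calc k = ∑ _l : Fin k, 1 := by simp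
      _ ≤ ∑ l, t l := Finset.sum_le_sum fun l _ => Nat.one_le_iff_ne_zero.mpr (ht l)
      _ = 1 := h
  omega

@[simp]
theorem SymOperad.one_act (O : SymOperad) {n : ℕ} (x : O.ops n) : O.act 1 x = x :=
  O.act_one x

theorem preRel_equivalence (O : SymOperad) (n : ℕ) : Equivalence (PreRel O n) where
  refl x := ⟨1, by rw [inv_one, O.one_act]; rfl⟩
  symm := by
    rintro x _ ⟨σ, rfl⟩
    refine ⟨σ⁻¹, ?_⟩
    dsimp only
    rw [← O.act_mul, inv_inv, mul_inv_cancel, O.one_act, Function.comp_assoc,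
      ← Equiv.Perm.coe_mul, mul_inv_cancel]
    rfl
  trans := by
    rintro x _ _ ⟨σ, rfl⟩ ⟨τ, rfl⟩
    refine ⟨σ * τ, ?_⟩
    dsimp only
    rw [mul_inv_rev, O.act_mul]
    rfl

variable {O : SymOperad} {n m : ℕ}

theorem SpanOp.mk_eq_mk_iff {x y : PreOp O n} :
    (Quot.mk _ x : SpanOp O n) = Quot.mk _ y ↔ PreRel O n x y :=
  Quot.eq.trans (preRel_equivalence O n).eqvGen_iff

def SpanOp.arity : SpanOp O n → ℕ :=
  Quot.lift Sigma.fst fun _ _ ⟨_, h⟩ => by rw [h]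

def SpanOp.unary (i : Fin n) (a : O.ops 1) : SpanOp O n :=
  Quot.mk _ ⟨1, fun _ => i, a⟩

theorem SpanOp.unary_inj {i j : Fin n} {a b : O.ops 1} :
    SpanOp.unary i a = SpanOp.unary j b ↔ i = j ∧ a = b := by
  refine ⟨fun h => ?_, fun ⟨hij, hab⟩ => hij ▸ hab ▸ rfl⟩
  obtain ⟨σ, hσ⟩ := SpanOp.mk_eq_mk_iff.mp h
  obtain rfl : σ = 1 := Subsingleton.elim _ _
  rw [inv_one, O.one_act] at hσ
  obtain ⟨hφ, hg⟩ := Prod.mk.inj (eq_of_heq (Sigma.mk.inj hσ).2)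
  exact ⟨(congrFun hφ 0).symm, hg.symm⟩

theorem SpanOp.exists_unary_of_arity_eq_one {s : SpanOp O n} (h : s.arity = 1) :
    ∃ i a, s = SpanOp.unary i a := by
  induction s using Quot.ind with
  | mk x =>
    obtain ⟨r, φ, g⟩ := x
    obtain rfl : r = 1 := h
    exact ⟨φ 0, g, congrArg (Quot.mk _) <| by
      congr; funext l; rw [Fin.fin_one_eq_zero l]⟩

theorem SpanOp.mk_compPre_unary (j : Fin m) (b : O.ops 1) (c : Fin m → Fin n)
    (a : Fin m → O.ops 1) :
    Quot.mk _ (compPre O ⟨1, fun _ => j, b⟩ fun i => ⟨1, fun _ => c i, a i⟩)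
      = SpanOp.unary (c j) (O.comp1 (a j) b) := by
  unfold compPre SpanOp.unary SymOperad.comp1
  congr 1

theorem fst_eq_one_of_compPre {x : Fin n → PreOp O m} {y : Fin m → PreOp O n}
    (hxy : ∀ j, (compPre O (x j) y).1 = 1) (hyx : ∀ i, (compPre O (y i) x).1 = 1)
    (i : Fin m) : (y i).1 = 1 :=
  Fin.eq_one_of_sum_eq_one (hyx i) fun _ => Fin.ne_zero_of_sum_eq_one (hxy _)

namespace SpanModel

variable {T : LawTheory} (M : SpanModel O T)

theorem e_id (j : Fin n) : M.e (T.id n) j = SpanOp.unary j O.unit :=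
  congrFun (M.id_eq n) j

theorem arity_e_eq_one {f : T.Hom n m} {g : T.Hom m n} (hfg : T.comp f g = T.id n)
    (hgf : T.comp g f = T.id m) (i : Fin m) : (M.e f i).arity = 1 := by
  choose y hy using fun i => Quot.exists_rep (M.e f i)
  choose x hx using fun j => Quot.exists_rep (M.e g j)
  have hxy j : (compPre O (x j) y).1 = 1 := by
    have := M.comp_eq f g y x (fun i => (hy i).symm) (fun j => (hx j).symm) j
    rw [hfg, M.e_id] at this
    exact congrArg SpanOp.arity this.symm
  have hyx i : (compPre O (y i) x).1 = 1 := by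
    have := M.comp_eq g f x y (fun j => (hx j).symm) (fun i => (hy i).symm) i
    rw [hgf, M.e_id] at this
    exact congrArg SpanOp.arity this.symm
  rw [← hy i]
  exact fst_eq_one_of_compPre hxy hyx i

theorem e_comp_unary {k : ℕ} {f : T.Hom n m} {g : T.Hom m k} {c : Fin m → Fin n}
    {a : Fin m → O.ops 1} {d : Fin k → Fin m} {b : Fin k → O.ops 1}
    (hf : ∀ i, M.e f i = SpanOp.unary (c i) (a i))
    (hg : ∀ j, M.e g j = SpanOp.unary (d j) (b j))
    (j : Fin k) : M.e (T.comp f g) j = SpanOp.unary (c (d j)) (O.comp1 (a (d j)) (b j)) :=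
  (M.comp_eq f g _ _ hf hg j).trans (SpanOp.mk_compPre_unary _ _ _ _)

theorem unary_inverse_of_comp_eq_id {f : T.Hom n m} {g : T.Hom m n} {c : Fin m → Fin n}
    {a : Fin m → O.ops 1} {d : Fin n → Fin m} {b : Fin n → O.ops 1}
    (hf : ∀ i, M.e f i = SpanOp.unary (c i) (a i))
    (hg : ∀ j, M.e g j = SpanOp.unary (d j) (b j))
    (hfg : T.comp f g = T.id n) (j : Fin n) : c (d j) = j ∧ O.comp1 (a (d j)) (b j) = O.unit :=
  SpanOp.unary_inj.mp <| (M.e_comp_unary hf hg j).symm.trans (by rw [hfg, M.e_id])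

end SpanModel

/-- in the span Lawvere theory `P(O)` of a symmetric operad `O`, every
isomorphism `n → n` is represented by a unique span `(φ, id_n, (a_i))` with `φ` a
bijection and each `a_i ∈ O₁` invertible for the operadic composition. -/
theorem span_iso_unique_representative (O : SymOperad) (T : LawTheory)
    (M : SpanModel O T) (n : ℕ) (f : T.Hom n n) (hf : T.IsInvertible f) :
    ∃! p : Equiv.Perm (Fin n) × (Fin n → O.ops 1),
      (∀ i, ∃ b : O.ops 1,
        O.comp1 (p.2 i) b = O.unit ∧ O.comp1 b (p.2 i) = O.unit) ∧
      ∀ i, M.e f i = Quot.mk _ ⟨1, fun _ => p.1 i, p.2 i⟩ := by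
  obtain ⟨g, hfg, hgf⟩ := hf
  choose c a hfa using fun i => SpanOp.exists_unary_of_arity_eq_one (M.arity_e_eq_one hfg hgf i)
  choose d b hgb using fun j => SpanOp.exists_unary_of_arity_eq_one (M.arity_e_eq_one hgf hfg j)
  have hdc := M.unary_inverse_of_comp_eq_id hfa hgb hfg
  have hcd := M.unary_inverse_of_comp_eq_id hgb hfa hgf
  refine ⟨(⟨c, d, fun i => (hcd i).1, fun j => (hdc j).1⟩, a),
    ⟨fun i => ⟨b (c i), ?_, (hcd i).2⟩, hfa⟩, ?_⟩
  · simpa only [(hcd i).1] using (hdc (c i)).2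
  · rintro ⟨σ, a'⟩ ⟨-, ha'⟩
    have h i := SpanOp.unary_inj.mp ((ha' i).symm.trans (hfa i))
    exact Prod.ext (Equiv.ext fun i => (h i).1) (funext fun i => (h i).2)
end

section
/- For every symmetric operad O, the object 1 is indecomposable in the Lawvere theory P(O): if morphisms p : 1 → m and p' : 1 → m' exhibit 1 as the product m × m', then m = 0 or m' = 0. -/
/-!
The invariant is the support of a span, the set of variables hit by its function leg: it is
unchanged by the equivalence of spans, and the support of the `j`-th component of `f ≫ g` is
the union, over the variables `i` in the support of the `j`-th component of `g`, of the supports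
of the `i`-th components of `f`. If `p : 1 → m` and `p' : 1 → m'` with `m, m' ≠ 0` exhibited
`1` as a product, there would be `w : 2 → 1` with `w ≫ p` constantly the projection onto `0` and
`w ≫ p'` constantly the projection onto `1`. As `1` has a single variable, the union above
collapses to the support of `w`, which would then be both `{0}` and `{1}`.
-/

namespace SpanOp

def support {O : SymOperad} {n : ℕ} : SpanOp O n → Set (Fin n) :=
  Quot.lift (fun x => Set.range x.2.1) (by
    rintro x y ⟨σ, rfl⟩
    exact (EquivLike.range_comp _ σ).symm)

@[simp]
theorem support_mk {O : SymOperad} {n : ℕ} (x : PreOp O n) :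
    support (Quot.mk _ x) = Set.range x.2.1 :=
  rfl

end SpanOp

theorem range_compPre (O : SymOperad) {n m : ℕ} (x : PreOp O m) (y : Fin m → PreOp O n) :
    Set.range (compPre O x y).2.1 = ⋃ i ∈ Set.range x.2.1, Set.range (y i).2.1 := by
  change Set.range ((fun s : Σ l, Fin (y (x.2.1 l)).1 => (y (x.2.1 s.1)).2.1 s.2) ∘
    (finSigma _).symm) = _
  rw [EquivLike.range_comp, Set.biUnion_range]
  ext t
  simp [Sigma.exists]

namespace SpanModel

variable {O : SymOperad} {T : LawTheory} (M : SpanModel O T)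

theorem support_comp {n m k : ℕ} (f : T.Hom n m) (g : T.Hom m k) (j : Fin k) :
    (M.e (T.comp f g) j).support = ⋃ i ∈ (M.e g j).support, (M.e f i).support := by
  choose y hy using fun i => Quot.exists_rep (M.e f i)
  choose x hx using fun j => Quot.exists_rep (M.e g j)
  rw [M.comp_eq f g y x (fun i => (hy i).symm) (fun j => (hx j).symm), ← hx]
  simp only [SpanOp.support_mk, range_compPre, ← hy]

theorem support_tuple_proj {n μ : ℕ} (t : Fin n) (j : Fin μ) :
    (M.e (T.tuple fun _ => T.proj n t) j).support = {t} := by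
  rw [M.tuple_eq, M.proj_eq]
  exact Set.range_const

theorem support_eq_of_comp_eq_tuple_proj {n μ : ℕ} {w : T.Hom n 1} {q : T.Hom 1 μ} {t : Fin n}
    (h : T.comp w q = T.tuple fun _ => T.proj n t) (j : Fin μ) :
    (M.e w 0).support = {t} := by
  have hj := M.support_comp w q j
  rw [h, M.support_tuple_proj] at hj
  obtain ⟨i, hi, -⟩ := Set.mem_iUnion₂.mp (hj ▸ Set.mem_singleton t)
  obtain rfl : i = 0 := Subsingleton.elim _ _
  rw [hj]
  refine (Set.subset_biUnion_of_mem (u := fun i => (M.e w i).support) hi).antisymm ?_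
  exact Set.iUnion₂_subset fun i _ => by rw [Subsingleton.elim i 0]

end SpanModel

/-- the object `1` is indecomposable in the span Lawvere theory `P(O)` of
any symmetric operad `O`: if `p : 1 → m` and `p' : 1 → m'` exhibit `1` as the product
`m × m'`, then `m = 0` or `m' = 0`. -/
theorem one_indecomposable_in_span_theory (O : SymOperad) (T : LawTheory)
    (M : SpanModel O T) (m m' : ℕ) (p : T.Hom 1 m) (p' : T.Hom 1 m')
    (hprod : ∀ (a : ℕ) (u : T.Hom a m) (v : T.Hom a m'),
      ∃! w : T.Hom a 1, T.comp w p = u ∧ T.comp w p' = v) :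
    m = 0 ∨ m' = 0 := by
  by_contra! ⟨hm, hm'⟩
  obtain ⟨w, ⟨hp, hp'⟩, -⟩ :=
    hprod 2 (T.tuple fun _ => T.proj 2 0) (T.tuple fun _ => T.proj 2 1)
  have h0 := M.support_eq_of_comp_eq_tuple_proj hp ⟨0, Nat.pos_of_ne_zero hm⟩
  have h1 := M.support_eq_of_comp_eq_tuple_proj hp' ⟨0, Nat.pos_of_ne_zero hm'⟩
  exact absurd (h0.symm.trans h1) (by simp)
end

section
/- In any analytic Lawvere theory T, every morphism f : n → m factors as f = a ∘ π_φ with a analytic and φ : (k] → (n] a function, and this factorization is unique up to permutation: if f = a' ∘ π_{φ'} is another such factorization then there is σ ∈ S_k with φ ∘ σ = φ' and a = a' ∘ π_σ. -/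
/-!
Existence: the factorization system gives `f = e ≫ g` with `e` structural and `g` analytic,
and by simple automorphisms every structural morphism has the form `π_φ ≫ x` with `x` invertible;
analytic morphisms are stable under precomposition with isomorphisms.

Uniqueness: two (structural, analytic) factorizations of the same morphism differ by a unique
isomorphism `w : k ≅ k'`. Simple automorphisms force `k = k'`: the automorphism of `k + k'`
exchanging the two blocks through `w` is a permutation twisted by unary automorphisms, and a
projection `proj p ≫ b` factoring through the first block forces `p` into that block, so the
permutation maps the second block injectively into the first. Finally an automorphism `w` with
`π_φ ≫ w = π_φ'` is of the form `ρ(σ, b)`, and comparing projections gives `b = 1` and `φ ∘ σ = φ'`.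
-/

namespace LawTheory

variable {T : LawTheory}

lemma hom_ext {a n : ℕ} {f g : T.Hom a n}
    (h : ∀ i, T.comp f (T.proj n i) = T.comp g (T.proj n i)) : f = g := by
  rw [← T.tuple_eta f, ← T.tuple_eta g, funext h]

lemma hom_ext_zero {a : ℕ} (f g : T.Hom a 0) : f = g :=
  hom_ext fun i => i.elim0

lemma pi_proj {n m : ℕ} (φ : Fin m → Fin n) (i : Fin m) :
    T.comp (T.pi φ) (T.proj m i) = T.proj n (φ i) :=
  T.tuple_proj _ i

lemma pi_comp_pi {n m l : ℕ} (φ : Fin m → Fin n) (ψ : Fin l → Fin m) :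
    T.comp (T.pi φ) (T.pi ψ) = T.pi (φ ∘ ψ) :=
  hom_ext fun i => by rw [T.assoc, pi_proj, pi_proj, pi_proj, Function.comp_apply]

lemma IsInvertible.id (n : ℕ) : T.IsInvertible (T.id n) :=
  ⟨T.id n, T.id_comp _, T.id_comp _⟩

lemma IsInvertible.comp {a b c : ℕ} {f : T.Hom a b} {g : T.Hom b c}
    (hf : T.IsInvertible f) (hg : T.IsInvertible g) : T.IsInvertible (T.comp f g) := by
  obtain ⟨f', hff', hf'f⟩ := hf
  obtain ⟨g', hgg', hg'g⟩ := hg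
  refine ⟨T.comp g' f', ?_, ?_⟩
  · rw [T.assoc f g, ← T.assoc g g' f', hgg', T.id_comp, hff']
  · rw [T.assoc g' f', ← T.assoc f' f g, hf'f, T.id_comp, hg'g]

lemma IsInvertible.cancel_right {a b c : ℕ} {x y : T.Hom a b} {f : T.Hom b c}
    (hf : T.IsInvertible f) (h : T.comp x f = T.comp y f) : x = y := by
  obtain ⟨f', hff', -⟩ := hf
  rw [← T.comp_id x, ← T.comp_id y, ← hff', ← T.assoc, ← T.assoc, h]

lemma structural_pi {n k : ℕ} (φ : Fin k → Fin n) : T.Structural (T.pi φ) :=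
  ⟨φ, T.id n, T.id k, .id n, .id k, by rw [T.comp_id, T.id_comp]⟩

lemma Analytic.invertible_comp {k m : ℕ} {x : T.Hom k k} {g : T.Hom k m}
    (hg : T.Analytic g) (hx : T.IsInvertible x) : T.Analytic (T.comp x g) := by
  intro a b e he u v huv
  obtain ⟨y, hxy, hyx⟩ := hx
  obtain ⟨w, ⟨hew, hwg⟩, hw_unique⟩ := hg e he (T.comp u x) v (by rw [T.assoc, huv])
  refine ⟨T.comp w y, ⟨?_, ?_⟩, fun w' ⟨hew', hw'g⟩ => ?_⟩
  · rw [← T.assoc, hew, T.assoc, hxy, T.comp_id]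
  · rw [T.assoc, ← T.assoc y x g, hyx, T.id_comp, hwg]
  · have hw' : T.comp w' x = w := hw_unique _ ⟨by rw [← T.assoc, hew'], by rw [T.assoc, hw'g]⟩
    rw [← hw', T.assoc, hxy, T.comp_id]

lemma exists_inverse_of_comp_eq {n k k' m : ℕ} {e : T.Hom n k} {e' : T.Hom n k'}
    {a : T.Hom k m} {a' : T.Hom k' m} (he : T.Structural e) (he' : T.Structural e')
    (ha : T.Analytic a) (ha' : T.Analytic a') (h : T.comp e a = T.comp e' a') :
    ∃ (w : T.Hom k k') (w' : T.Hom k' k), T.comp e w = e' ∧ T.comp w a' = a ∧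
      T.comp w w' = T.id k ∧ T.comp w' w = T.id k' := by
  obtain ⟨w, ⟨hew, hwa⟩, -⟩ := ha' e he e' a h.symm
  obtain ⟨w', ⟨hew', hwa'⟩, -⟩ := ha e' he' e a' h
  refine ⟨w, w', hew, hwa, ?_, ?_⟩
  · exact (ha e he e a rfl).unique ⟨by rw [← T.assoc, hew, hew'], by rw [T.assoc, hwa', hwa]⟩
      ⟨T.comp_id e, T.id_comp a⟩
  · exact (ha' e' he' e' a' rfl).unique ⟨by rw [← T.assoc, hew', hew], by rw [T.assoc, hwa, hwa']⟩
      ⟨T.comp_id e', T.id_comp a'⟩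

lemma rho_proj {n : ℕ} (σ : Equiv.Perm (Fin n))
    (b : Fin n → {f : T.Hom 1 1 // T.IsInvertible f}) (i : Fin n) :
    T.comp (T.rho n (σ, b)) (T.proj n i) = T.comp (T.proj n (σ i)) (b i).1 := by
  rw [rho, T.assoc, T.tuple_proj, ← T.assoc, pi_proj]

lemma rho_comp_pi {n k : ℕ} (σ : Equiv.Perm (Fin n))
    (b : Fin n → {f : T.Hom 1 1 // T.IsInvertible f}) (φ : Fin k → Fin n) :
    T.comp (T.rho n (σ, b)) (T.pi φ) = T.comp (T.pi (σ ∘ φ)) (T.rho k (1, b ∘ φ)) :=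
  hom_ext fun i => by
    rw [T.assoc, pi_proj, rho_proj, T.assoc, rho_proj, ← T.assoc, pi_proj]
    rfl

lemma Structural.exists_eq_pi_comp
    (hρ : ∀ n, Set.range (T.rho n) = {f : T.Hom n n | T.IsInvertible f})
    {n m : ℕ} {e : T.Hom n m} (he : T.Structural e) :
    ∃ (φ : Fin m → Fin n) (x : T.Hom m m), T.IsInvertible x ∧ e = T.comp (T.pi φ) x := by
  obtain ⟨φ, u, v, hu, hv, rfl⟩ := he
  obtain ⟨⟨σ, b⟩, rfl⟩ : u ∈ Set.range (T.rho n) := by rw [hρ]; exact hu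
  have hx : T.IsInvertible (T.rho m (1, b ∘ φ)) := by
    have := Set.mem_range_self (f := T.rho m) (1, b ∘ φ)
    rwa [hρ] at this
  exact ⟨σ ∘ φ, _, hx.comp hv, by rw [← T.assoc, rho_comp_pi, T.assoc]⟩

lemma proj_comp_eq_proj {n : ℕ} (hρ : Function.Injective (T.rho n)) {p q : Fin n}
    {d : T.Hom 1 1} (hd : T.IsInvertible d) (h : T.comp (T.proj n p) d = T.proj n q) :
    p = q ∧ d = T.id 1 := by
  classical
  obtain ⟨d', hdd', hd'd⟩ := hd
  let one : {f : T.Hom 1 1 // T.IsInvertible f} := ⟨T.id 1, .id 1⟩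
  let b : Fin n → {f : T.Hom 1 1 // T.IsInvertible f} := fun i =>
    if i = q then ⟨d, d', hdd', hd'd⟩ else if i = p then ⟨d', d, hd'd, hdd'⟩ else one
  -- `b` is chosen so that `ρ(swap p q, b) = ρ(1, 1)`; injectivity of `ρ` then gives `p = q`, `d = 1`.
  have hid : T.rho n (Equiv.swap p q, b) = T.rho n (1, fun _ => one) := by
    refine hom_ext fun i => ?_
    rw [rho_proj, rho_proj, T.comp_id, Equiv.Perm.one_apply]
    by_cases hiq : i = q
    · subst hiq
      rw [show (b i).1 = d by simp [b], Equiv.swap_apply_right, h]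
    by_cases hip : i = p
    · subst hip
      rw [show (b i).1 = d' by simp [b, hiq], Equiv.swap_apply_left, ← h, T.assoc, hdd', T.comp_id]
    · rw [show (b i).1 = T.id 1 by simp [b, hiq, hip, one], Equiv.swap_apply_of_ne_of_ne hip hiq,
        T.comp_id]
  obtain ⟨hσ, hb⟩ := Prod.ext_iff.mp (hρ hid)
  refine ⟨by simpa using congrArg (· q) hσ, ?_⟩
  simpa [b] using congrArg Subtype.val (congrFun hb q)

lemma proj_injective {n : ℕ} (hρ : Function.Injective (T.rho n)) :
    Function.Injective (T.proj n) := fun p q h =>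
  (proj_comp_eq_proj hρ (.id 1) (by rw [T.comp_id, h])).1

lemma exists_perm_of_pi_comp_eq {n k : ℕ} (hρ : Function.Injective (T.rho n))
    {φ φ' : Fin k → Fin n} {w : T.Hom k k} (hw : w ∈ Set.range (T.rho k))
    (h : T.comp (T.pi φ) w = T.pi φ') :
    ∃ σ : Equiv.Perm (Fin k), φ ∘ σ = φ' ∧ w = T.pi σ := by
  obtain ⟨⟨σ, b⟩, rfl⟩ := hw
  have hb : ∀ i, φ (σ i) = φ' i ∧ (b i).1 = T.id 1 := fun i => by
    refine proj_comp_eq_proj hρ (b i).2 ?_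
    rw [← pi_proj φ', ← h, T.assoc, rho_proj, ← T.assoc, pi_proj]
  refine ⟨σ, funext fun i => (hb i).1, hom_ext fun i => ?_⟩
  rw [rho_proj, (hb i).2, T.comp_id, pi_proj]

lemma eq_zero_of_comp_eq_id (hρ : Function.Injective (T.rho 2)) {k : ℕ} {h : T.Hom k 0}
    {w : T.Hom 0 k} (hhw : T.comp h w = T.id k) : k = 0 := by
  by_contra hk
  have hsub : ∀ x y : T.Hom 2 k, x = y := fun x y => by
    rw [← T.comp_id x, ← T.comp_id y, ← hhw, ← T.assoc, ← T.assoc,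
      hom_ext_zero (T.comp x h) (T.comp y h)]
  have h01 := congrArg (T.comp · (T.proj k ⟨0, Nat.pos_of_ne_zero hk⟩))
    (hsub (T.pi fun _ => 0) (T.pi fun _ => 1))
  simp only [pi_proj] at h01
  exact absurd (proj_injective hρ h01) (by decide)

def pair {a b c : ℕ} (f : T.Hom a b) (g : T.Hom a c) : T.Hom a (b + c) :=
  T.tuple (Fin.addCases (fun i => T.comp f (T.proj b i)) fun j => T.comp g (T.proj c j))

lemma pair_comp_pi_castAdd {a b c : ℕ} (f : T.Hom a b) (g : T.Hom a c) :
    T.comp (T.pair f g) (T.pi (Fin.castAdd c)) = f :=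
  hom_ext fun i => by rw [T.assoc, pi_proj, pair, T.tuple_proj, Fin.addCases_left]

lemma pair_comp_pi_natAdd {a b c : ℕ} (f : T.Hom a b) (g : T.Hom a c) :
    T.comp (T.pair f g) (T.pi (Fin.natAdd b)) = g :=
  hom_ext fun j => by rw [T.assoc, pi_proj, pair, T.tuple_proj, Fin.addCases_right]

lemma hom_ext_add {a b c : ℕ} {x y : T.Hom a (b + c)}
    (hl : T.comp x (T.pi (Fin.castAdd c)) = T.comp y (T.pi (Fin.castAdd c)))
    (hr : T.comp x (T.pi (Fin.natAdd b)) = T.comp y (T.pi (Fin.natAdd b))) : x = y := by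
  refine hom_ext fun i => ?_
  induction i using Fin.addCases with
  | left i => rw [← pi_proj, ← T.assoc, ← T.assoc, hl]
  | right j => rw [← pi_proj, ← T.assoc, ← T.assoc, hr]

def blockSwap {k k' : ℕ} (h : T.Hom k k') (w : T.Hom k' k) : T.Hom (k + k') (k + k') :=
  T.pair (T.comp (T.pi (Fin.natAdd k)) w) (T.comp (T.pi (Fin.castAdd k')) h)

lemma blockSwap_comp_blockSwap {k k' : ℕ} {h : T.Hom k k'} {w : T.Hom k' k}
    (hhw : T.comp h w = T.id k) (hwh : T.comp w h = T.id k') :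
    T.comp (T.blockSwap h w) (T.blockSwap h w) = T.id (k + k') := by
  apply hom_ext_add
  · rw [T.assoc, blockSwap, pair_comp_pi_castAdd, ← T.assoc, pair_comp_pi_natAdd, T.assoc, hhw,
      T.comp_id, T.id_comp]
  · rw [T.assoc, blockSwap, pair_comp_pi_natAdd, ← T.assoc, pair_comp_pi_castAdd, T.assoc, hwh,
      T.comp_id, T.id_comp]

lemma le_of_comp_eq_id (hS : T.HasSimpleAut) {k k' : ℕ} (hk : 0 < k) {h : T.Hom k k'}
    {w : T.Hom k' k} (hhw : T.comp h w = T.id k) (hwh : T.comp w h = T.id k') : k' ≤ k := by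
  have hA := blockSwap_comp_blockSwap hhw hwh
  obtain ⟨⟨σ, b⟩, hσ⟩ : T.blockSwap h w ∈ Set.range (T.rho (k + k')) := by
    rw [(hS _).2]; exact ⟨_, hA, hA⟩
  let r : Fin (k + k') → Fin k := Fin.addCases (fun i => i) fun _ => ⟨0, hk⟩
  have hr : (Fin.castAdd k' ∘ r) ∘ Fin.castAdd k' = Fin.castAdd k' :=
    funext fun i => by simp [r]
  -- `blockSwap h w ≫ proj (natAdd j)` factors through `π_castAdd`, which `π_(castAdd ∘ r)` fixes.
  have hfix : ∀ j, Fin.castAdd k' (r (σ (Fin.natAdd k j))) = σ (Fin.natAdd k j) := fun j => by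
    have hproj : T.comp (T.blockSwap h w) (T.proj _ (Fin.natAdd k j))
        = T.comp (T.pi (Fin.castAdd k')) (T.comp h (T.proj k' j)) := by
      rw [← pi_proj, ← T.assoc, blockSwap, pair_comp_pi_natAdd, T.assoc]
    have hinv := congrArg (T.comp (T.pi (Fin.castAdd k' ∘ r))) hproj
    rw [← T.assoc (T.pi _) (T.pi _), pi_comp_pi, hr, ← hproj, ← hσ, rho_proj, ← T.assoc,
      pi_proj] at hinv
    exact proj_injective (hS _).1 ((b _).2.cancel_right hinv)
  refine Fin.le_of_injective (r ∘ σ ∘ Fin.natAdd k) fun j₁ j₂ hj => ?_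
  have := congrArg (Fin.castAdd k') hj
  simp only [Function.comp_apply, hfix] at this
  exact Fin.natAdd_injective _ _ (σ.injective this)

lemma eq_of_comp_eq_id (hS : T.HasSimpleAut) {k k' : ℕ} {h : T.Hom k k'} {w : T.Hom k' k}
    (hhw : T.comp h w = T.id k) (hwh : T.comp w h = T.id k') : k = k' := by
  rcases Nat.eq_zero_or_pos k with rfl | hk
  · exact (eq_zero_of_comp_eq_id (hS 2).1 hwh).symm
  rcases Nat.eq_zero_or_pos k' with rfl | hk'
  · exact eq_zero_of_comp_eq_id (hS 2).1 hhw
  exact le_antisymm (le_of_comp_eq_id hS hk' hwh hhw) (le_of_comp_eq_id hS hk hhw hwh)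

end LawTheory

/-- in an analytic Lawvere theory every morphism factors as
`f = a ∘ π_φ` with `a` analytic, uniquely up to a permutation. -/
theorem analytic_theory_factorization (T : LawTheory) (hT : T.IsAnalyticTheory)
    {n m : ℕ} (f : T.Hom n m) :
    (∃ (k : ℕ) (φ : Fin k → Fin n) (a : T.Hom k m),
        T.Analytic a ∧ f = T.comp (T.pi φ) a) ∧
    (∀ (k k' : ℕ) (φ : Fin k → Fin n) (a : T.Hom k m)
        (φ' : Fin k' → Fin n) (a' : T.Hom k' m),
        T.Analytic a → T.Analytic a' →
        f = T.comp (T.pi φ) a → f = T.comp (T.pi φ') a' →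
        ∃ σ : Fin k' ≃ Fin k, φ ∘ ⇑σ = φ' ∧ a = T.comp (T.pi ⇑σ) a') := by
  obtain ⟨hfac, hS⟩ := hT
  refine ⟨?_, fun k k' φ a φ' a' ha ha' hfa hfa' => ?_⟩
  · obtain ⟨k, e, g, he, hg, rfl⟩ := hfac f
    obtain ⟨φ, x, hx, rfl⟩ := he.exists_eq_pi_comp fun n => (hS n).2
    exact ⟨k, φ, T.comp x g, hg.invertible_comp hx, T.assoc _ _ _⟩
  · obtain ⟨w, w', hφw, hwa, hww', hw'w⟩ := LawTheory.exists_inverse_of_comp_eq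
      (LawTheory.structural_pi φ) (LawTheory.structural_pi φ') ha ha' (hfa.symm.trans hfa')
    obtain rfl := LawTheory.eq_of_comp_eq_id hS hww' hw'w
    obtain ⟨σ, hσ, rfl⟩ := LawTheory.exists_perm_of_pi_comp_eq (hS n).1
      (by rw [(hS k).2]; exact ⟨w', hww', hw'w⟩) hφw
    exact ⟨σ, hσ, hwa.symm⟩
end

section
/- The inclusion of the category of analytic endofunctors of Set into finitary endofunctors of Set has a right adjoint, the 'analytic part' functor (-)^a, given by F^a(X) = Σ_{n∈ℕ} X^n ⊗_{S_n} F((n]), with counit at F sending the class of (x⃗, t) ∈ X^n ⊗_{S_n} F((n]) to F(x⃗)(t). -/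
open CategoryTheory

/-- Elements `(x⃗, a)` of `∑ₙ Xⁿ × Aₙ`. -/
def AnElem (A : ℕ → Type) (X : Type) : Type := Σ n : ℕ, (Fin n → X) × A n

/-- The tensor relation `(x⃗ ∘ σ, a) ∼ (x⃗, σ · a)` for a family of `Sₙ`-sets. -/
def AnRel (A : ℕ → Type) (act : ∀ n : ℕ, Equiv.Perm (Fin n) → A n → A n) (X : Type) :
    AnElem A X → AnElem A X → Prop := fun a b =>
  ∃ (n : ℕ) (x : Fin n → X) (σ : Equiv.Perm (Fin n)) (g : A n),
    a = ⟨n, x ∘ ⇑σ, g⟩ ∧ b = ⟨n, x, act n σ g⟩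

/-- The analytic endofunctor `X ↦ ∑ₙ Xⁿ ⊗_{Sₙ} Aₙ` of a family of `Sₙ`-sets. -/
def anRealize (A : ℕ → Type) (act : ∀ n : ℕ, Equiv.Perm (Fin n) → A n → A n) :
    Type ⥤ Type where
  obj X := Quot (AnRel A act X)
  map {X Y} h := TypeCat.ofHom (Quot.lift
    (fun a => Quot.mk (AnRel A act Y) ⟨a.1, h ∘ a.2.1, a.2.2⟩)
    (by rintro a b ⟨n, x, σ, g, rfl, rfl⟩
        exact Quot.sound ⟨n, h ∘ x, σ, g, rfl, rfl⟩))
  map_id X := by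
    ext t
    induction t using Quot.ind
    rfl
  map_comp f g := by
    ext t
    induction t using Quot.ind
    rfl

/-- A functor is analytic if it is isomorphic to the realization of a family of
`Sₙ`-sets. -/
def IsAnalyticFunctor (G : Type ⥤ Type) : Prop :=
  ∃ (A : ℕ → Type) (act : ∀ n : ℕ, Equiv.Perm (Fin n) → A n → A n),
    Nonempty (G ≅ anRealize A act)

/-- A natural transformation is weakly cartesian if all its naturality squares are
weak pullbacks. -/
def WeaklyCartesian {F G : Type ⥤ Type} (θ : F ⟶ G) : Prop :=
  ∀ (X Y : Type) (f : X → Y) (a : F.obj Y) (b : G.obj X),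
    G.map (TypeCat.ofHom f) b = θ.app Y a → ∃ a' : F.obj X, F.map (TypeCat.ofHom f) a' = a ∧ θ.app X a' = b

/-- The analytic part `Fᵃ(X) = ∑ₙ Xⁿ ⊗_{Sₙ} F((n])` of an endofunctor of `Set`. -/
def analyticPart (F : Type ⥤ Type) : Type ⥤ Type :=
  anRealize (fun n => F.obj (Fin n)) (fun _ σ t => F.map (TypeCat.ofHom ⇑σ) t)

/-- The component at `X` of the counit `εF : Fᵃ ⟶ F`, `[(x⃗, t)] ↦ F(x⃗)(t)`. -/
def anCounitApp (F : Type ⥤ Type) (X : Type) :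
    Quot (AnRel (fun n => F.obj (Fin n)) (fun _ σ t => F.map (TypeCat.ofHom ⇑σ) t) X) →
      F.obj X :=
  Quot.lift (fun a => F.map (TypeCat.ofHom a.2.1) a.2.2)
    (by rintro a b ⟨n, x, σ, g, rfl, rfl⟩
        exact congrArg (fun φ => φ g) (F.map_comp (TypeCat.ofHom ⇑σ) (TypeCat.ofHom x)))

/-- The counit `εF : Fᵃ ⟶ F`, `[(x⃗, t)] ↦ F(x⃗)(t)`. -/
def anCounit (F : Type ⥤ Type) : analyticPart F ⟶ F where
  app X := TypeCat.ofHom (anCounitApp F X)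
  naturality X Y f := by
    ext t
    induction t using Quot.ind with
    | _ a => exact congrArg (fun φ => φ a.2.2) (F.map_comp (TypeCat.ofHom a.2.1) f)

/-!
A natural transformation `η` out of a realization `anRealize A act` lifts through the counit as
`[(x⃗, g)] ↦ [(x⃗, η [(id, g)])]`. For uniqueness, note that every element is the image of a
generic one `[(id, g)]`, and that a weakly cartesian map between realizations sends generic
elements to generic elements: weak cartesianness produces a preimage, and comparing arities and
supports (the range of `x⃗`, which is an invariant of the class) shows that the representative
`y : Fin m → Fin n` of the image of `[(id, g)]` is onto and that `m = n`, so `y` is a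
permutation. A weakly cartesian map into `Fᵃ` is therefore determined by its composite with the
counit.
-/

namespace WeaklyCartesian

variable {F G H : Type ⥤ Type}

theorem comp {θ : F ⟶ G} {η : G ⟶ H} (hθ : WeaklyCartesian θ) (hη : WeaklyCartesian η) :
    WeaklyCartesian (θ ≫ η) := by
  intro X Y f a c hc
  obtain ⟨b, hb, rfl⟩ := hη X Y f (θ.app Y a) c hc
  obtain ⟨a', ha', rfl⟩ := hθ X Y f a b hb
  exact ⟨a', ha', rfl⟩

theorem of_isIso (θ : F ⟶ G) [IsIso θ] : WeaklyCartesian θ := by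
  intro X Y f a b hb
  refine ⟨(inv θ).app X b, ?_, by simp⟩
  rw [← NatTrans.naturality_apply, hb]
  simp

end WeaklyCartesian

namespace anRealize

variable {A : ℕ → Type} {act : ∀ n : ℕ, Equiv.Perm (Fin n) → A n → A n} {X Y : Type}

def generic {n : ℕ} (g : A n) : (anRealize A act).obj (Fin n) :=
  Quot.mk _ ⟨n, id, g⟩

theorem map_generic {n : ℕ} (x : Fin n → X) (g : A n) :
    (anRealize A act).map (TypeCat.ofHom x) (generic g) = Quot.mk _ ⟨n, x, g⟩ :=
  rfl

theorem mk_comp_perm {n : ℕ} (x : Fin n → X) (σ : Equiv.Perm (Fin n)) (g : A n) :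
    Quot.mk (AnRel A act X) ⟨n, x ∘ σ, g⟩ = Quot.mk _ ⟨n, x, act n σ g⟩ :=
  Quot.sound ⟨n, x, σ, g, rfl, rfl⟩

theorem generic_act {n : ℕ} (σ : Equiv.Perm (Fin n)) (g : A n) :
    generic (act := act) (act n σ g) = (anRealize A act).map (TypeCat.ofHom σ) (generic g) :=
  (mk_comp_perm id σ g).symm

def arity : (anRealize A act).obj X → ℕ :=
  Quot.lift (fun a => a.1) (by rintro _ _ ⟨n, x, σ, g, rfl, rfl⟩; rfl)

def support : (anRealize A act).obj X → Set X :=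
  Quot.lift (fun a => Set.range a.2.1)
    (by rintro _ _ ⟨n, x, σ, g, rfl, rfl⟩; exact EquivLike.range_comp x σ)

theorem support_map (f : X → Y) (q : (anRealize A act).obj X) :
    support ((anRealize A act).map (TypeCat.ofHom f) q) = f '' support q := by
  induction q using Quot.ind
  exact Set.range_comp f _

theorem anRel_equivalence (one_act : ∀ n g, act n 1 g = g)
    (mul_act : ∀ n σ τ g, act n (σ * τ) g = act n σ (act n τ g)) :
    Equivalence (AnRel A act X) where
  refl := by
    rintro ⟨n, x, g⟩
    exact ⟨n, x, 1, g, rfl, by rw [one_act]⟩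
  symm := by
    rintro _ _ ⟨n, x, σ, g, rfl, rfl⟩
    refine ⟨n, x ∘ σ, σ⁻¹, act n σ g, ?_, ?_⟩
    · rw [Function.comp_assoc, ← Equiv.Perm.coe_mul, mul_inv_cancel, Equiv.Perm.coe_one,
        Function.comp_id]
    · rw [← mul_act, inv_mul_cancel, one_act]
  trans := by
    rintro _ _ _ ⟨n, x, σ, g, rfl, hb⟩ ⟨m, y, τ, h, hb', rfl⟩
    obtain ⟨rfl, hb⟩ := Sigma.mk.inj_iff.mp (hb.symm.trans hb')
    obtain ⟨rfl, rfl⟩ := Prod.mk.inj (eq_of_heq hb)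
    exact ⟨n, y, τ * σ, g, rfl, by rw [mul_act]⟩

theorem anRel_of_mk_eq_mk (one_act : ∀ n g, act n 1 g = g)
    (mul_act : ∀ n σ τ g, act n (σ * τ) g = act n σ (act n τ g)) {a b : AnElem A X}
    (h : Quot.mk (AnRel A act X) a = Quot.mk _ b) : AnRel A act X a b :=
  (anRel_equivalence one_act mul_act).eqvGen_iff.mp (Quot.eqvGen_exact h)

end anRealize

open anRealize

theorem AnRel.exists_perm {A : ℕ → Type} {act : ∀ n : ℕ, Equiv.Perm (Fin n) → A n → A n}
    {X : Type} {n : ℕ} {x y : Fin n → X} {s t : A n} (h : AnRel A act X ⟨n, x, s⟩ ⟨n, y, t⟩) :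
    ∃ σ : Equiv.Perm (Fin n), x = y ∘ σ ∧ t = act n σ s := by
  obtain ⟨k, z, σ, s', h₁, h₂⟩ := h
  obtain ⟨rfl, h₁⟩ := Sigma.mk.inj_iff.mp h₁
  obtain ⟨-, h₂⟩ := Sigma.mk.inj_iff.mp h₂
  obtain ⟨rfl, rfl⟩ := Prod.mk.inj (eq_of_heq h₁)
  obtain ⟨rfl, rfl⟩ := Prod.mk.inj (eq_of_heq h₂)
  exact ⟨σ, rfl, rfl⟩

theorem WeaklyCartesian.exists_app_generic_eq {A : ℕ → Type}
    {act : ∀ n : ℕ, Equiv.Perm (Fin n) → A n → A n} {B : ℕ → Type}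
    {β : ∀ n : ℕ, Equiv.Perm (Fin n) → B n → B n} {θ : anRealize A act ⟶ anRealize B β}
    (hθ : WeaklyCartesian θ) {n : ℕ} (g : A n) :
    ∃ t : B n, θ.app (Fin n) (generic g) = generic t := by
  obtain ⟨⟨m, y, t⟩, hy⟩ := Quot.exists_rep (θ.app (Fin n) (generic g))
  obtain ⟨a', hya', hθa'⟩ := hθ (Fin m) (Fin n) y (generic g) (generic t) hy
  obtain ⟨⟨k, z, c⟩, rfl⟩ := Quot.exists_rep a'
  obtain rfl : k = n := congrArg arity hya'
  have hy_surj : Function.Surjective y := by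
    have h : Set.range (y ∘ z) = Set.range id := congrArg support hya'
    exact .of_comp (Set.range_eq_univ.mp (h.trans Set.range_id))
  have hz_surj : Function.Surjective z := by
    rw [← map_generic, NatTrans.naturality_apply] at hθa'
    have h : z '' support (θ.app (Fin _) (generic c)) = Set.range id := by
      rw [← support_map]
      exact congrArg support hθa'
    exact fun i => Set.image_subset_range z _ (h ▸ Set.mem_range_self i)
  obtain rfl : m = k := by
    have := Fintype.card_le_of_surjective y hy_surj
    have := Fintype.card_le_of_surjective z hz_surj
    simp only [Fintype.card_fin] at *
    omega
  set σ := Equiv.ofBijective y ⟨Finite.injective_iff_surjective.mpr hy_surj, hy_surj⟩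
  exact ⟨β m σ t, hy.symm.trans (mk_comp_perm id σ t)⟩

namespace analyticPart

variable {F : Type ⥤ Type} {A : ℕ → Type} {act : ∀ n : ℕ, Equiv.Perm (Fin n) → A n → A n}

theorem anRel_of_mk_eq_mk {X : Type} {a b : AnElem (fun n => F.obj (Fin n)) X}
    (h : (Quot.mk _ a : (analyticPart F).obj X) = Quot.mk _ b) :
    AnRel (fun n => F.obj (Fin n)) (fun _ σ t => F.map (TypeCat.ofHom ⇑σ) t) X a b :=
  anRealize.anRel_of_mk_eq_mk (fun _ _ => Functor.map_id_apply F _ _)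
    (fun _ σ τ _ => Functor.map_comp_apply F (TypeCat.ofHom τ) (TypeCat.ofHom σ) _) h

theorem anCounit_app_generic {n : ℕ} (t : F.obj (Fin n)) :
    (anCounit F).app (Fin n) (generic t) = t :=
  Functor.map_id_apply F _ t

def lift (η : anRealize A act ⟶ F) : anRealize A act ⟶ analyticPart F where
  app X := TypeCat.ofHom (Quot.lift
    (fun a => Quot.mk _ ⟨a.1, a.2.1, η.app (Fin a.1) (generic a.2.2)⟩)
    (by
      rintro _ _ ⟨n, x, σ, g, rfl, rfl⟩
      rw [generic_act, NatTrans.naturality_apply]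
      exact mk_comp_perm x σ _))
  naturality X Y f := by
    ext q
    induction q using Quot.ind
    rfl

theorem lift_comp_anCounit (η : anRealize A act ⟶ F) : lift η ≫ anCounit F = η := by
  ext X q
  induction q using Quot.ind with
  | _ a => exact (NatTrans.naturality_apply η (TypeCat.ofHom a.2.1) (generic a.2.2)).symm

theorem weaklyCartesian_lift (η : anRealize A act ⟶ F) : WeaklyCartesian (lift η) := by
  intro X Y f a b h
  obtain ⟨⟨n, y, g⟩, rfl⟩ := Quot.exists_rep a
  obtain ⟨⟨m, x, s⟩, rfl⟩ := Quot.exists_rep b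
  obtain rfl : m = n := congrArg arity h
  obtain ⟨σ, hfx, hs⟩ := (anRel_of_mk_eq_mk h).exists_perm
  replace hfx : f ∘ x = y ∘ σ := hfx
  replace hs : η.app (Fin m) (generic g) = F.map (TypeCat.ofHom σ) s := hs
  refine ⟨Quot.mk _ ⟨m, x ∘ σ.symm, g⟩, ?_, ?_⟩
  · change (Quot.mk _ ⟨m, f ∘ x ∘ σ.symm, g⟩ : (anRealize A act).obj Y) = _
    rw [← Function.comp_assoc, hfx, Function.comp_assoc, Equiv.self_comp_symm, Function.comp_id]
  · change (Quot.mk _ ⟨m, x ∘ σ.symm, η.app (Fin m) (generic g)⟩ : (analyticPart F).obj X) = _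
    rw [hs, ← mk_comp_perm, Function.comp_assoc, Equiv.symm_comp_self, Function.comp_id]

end analyticPart

theorem WeaklyCartesian.eq_lift_comp_anCounit {F : Type ⥤ Type} {A : ℕ → Type}
    {act : ∀ n : ℕ, Equiv.Perm (Fin n) → A n → A n} {θ : anRealize A act ⟶ analyticPart F}
    (hθ : WeaklyCartesian θ) : θ = analyticPart.lift (θ ≫ anCounit F) := by
  ext X q
  induction q using Quot.ind with
  | _ a =>
    obtain ⟨n, x, g⟩ := a
    change θ.app X (Quot.mk _ ⟨n, x, g⟩) =
      (analyticPart.lift (θ ≫ anCounit F)).app X (Quot.mk _ ⟨n, x, g⟩)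
    rw [← map_generic, NatTrans.naturality_apply, NatTrans.naturality_apply]
    congr 1
    obtain ⟨t, ht⟩ := hθ.exists_app_generic_eq g
    change _ = (generic ((anCounit F).app (Fin n) (θ.app (Fin n) (generic g))) :
      (analyticPart F).obj (Fin n))
    generalize θ.app (Fin n) (generic g) = q at ht ⊢
    subst ht
    rw [analyticPart.anCounit_app_generic]

theorem analytic_part_right_adjoint_general (F : Type ⥤ Type) :
    IsAnalyticFunctor (analyticPart F) ∧
    (∀ (X : Type) (n : ℕ) (x : Fin n → X) (t : F.obj (Fin n)),
      (anCounit F).app X (Quot.mk (AnRel (fun n => F.obj (Fin n))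
        (fun _ σ t => F.map (TypeCat.ofHom ⇑σ) t) X) ⟨n, x, t⟩) = F.map (TypeCat.ofHom x) t) ∧
    (∀ (G : Type ⥤ Type), IsAnalyticFunctor G → ∀ θ : G ⟶ F,
      ∃! θ' : {t : G ⟶ analyticPart F // WeaklyCartesian t},
        θ'.1 ≫ anCounit F = θ) := by
  refine ⟨⟨_, _, ⟨Iso.refl _⟩⟩, fun _ _ _ _ => rfl, ?_⟩
  rintro G ⟨A, act, ⟨α⟩⟩ θ
  refine ⟨⟨α.hom ≫ analyticPart.lift (α.inv ≫ θ),
    (WeaklyCartesian.of_isIso α.hom).comp (analyticPart.weaklyCartesian_lift _)⟩, ?_, ?_⟩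
  · simp [analyticPart.lift_comp_anCounit]
  · rintro ⟨θ', hθ'⟩ rfl
    refine Subtype.ext ?_
    change θ' = α.hom ≫ analyticPart.lift (α.inv ≫ θ' ≫ anCounit F)
    have h := ((WeaklyCartesian.of_isIso α.inv).comp hθ').eq_lift_comp_anCounit
    rw [Category.assoc] at h
    rw [← h, Iso.hom_inv_id_assoc]

/-- the inclusion of analytic endofunctors of `Set` into finitary
endofunctors has a right adjoint `(-)ᵃ`, with `Fᵃ(X) = ∑ₙ Xⁿ ⊗_{Sₙ} F((n])`, whose
counit sends the class of `(x⃗, t)` to `F(x⃗)(t)`: every natural transformation from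
an analytic functor `G` to `F` factors uniquely through the counit via a weakly
cartesian natural transformation `G ⟶ Fᵃ`. -/
theorem analytic_part_right_adjoint (F : Type ⥤ Type)
    [Limits.PreservesFilteredColimits F] :
    IsAnalyticFunctor (analyticPart F) ∧
    (∀ (X : Type) (n : ℕ) (x : Fin n → X) (t : F.obj (Fin n)),
      (anCounit F).app X (Quot.mk (AnRel (fun n => F.obj (Fin n))
        (fun _ σ t => F.map (TypeCat.ofHom ⇑σ) t) X) ⟨n, x, t⟩) = F.map (TypeCat.ofHom x) t) ∧
    (∀ (G : Type ⥤ Type), IsAnalyticFunctor G → ∀ θ : G ⟶ F,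
      ∃! θ' : {t : G ⟶ analyticPart F // WeaklyCartesian t},
        θ'.1 ≫ anCounit F = θ) :=
  analytic_part_right_adjoint_general F
end

section
/- An equational theory axiomatized entirely by linear-regular equations is a linear-regular theory: every equational consequence of a set A of linear-regular axioms which is itself an equation is derivable from the linear-regular consequences of A; in particular, in equational logic, linear-regular equations are closed under the rules of reflexivity, symmetry, transitivity, congruence, and substitution of linear-regular terms with disjoint variables. -/
/-- Terms over a graded signature `L` in context `x⃗ⁿ`. -/
inductive Tm (L : ℕ → Type) : ℕ → Type
  | var {n : ℕ} : Fin n → Tm L n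
  | op {n k : ℕ} : L k → (Fin k → Tm L n) → Tm L n

/-- Simultaneous substitution of terms for variables. -/
def Tm.subst {L : ℕ → Type} {n m : ℕ} : Tm L n → (Fin n → Tm L m) → Tm L m
  | .var i, θ => θ i
  | .op f ts, θ => .op f (fun j => (ts j).subst θ)

/-- The number of occurrences of the variable `i` in a term. -/
def Tm.countVar {L : ℕ → Type} {n : ℕ} : Tm L n → Fin n → ℕ
  | .var j, i => if j = i then 1 else 0
  | .op _ ts, i => ∑ j, (ts j).countVar i

/-- A term in context is linear-regular if every variable of the context occurs
in it exactly once. -/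
def LinReg {L : ℕ → Type} {n : ℕ} (t : Tm L n) : Prop := ∀ i, t.countVar i = 1

/-- An equation in context. -/
structure Eqn (L : ℕ → Type) where
  n : ℕ
  lhs : Tm L n
  rhs : Tm L n

/-- Derivability in equational logic from a set of axioms. -/
inductive Deriv (L : ℕ → Type) (A : Set (Eqn L)) : ∀ {n : ℕ}, Tm L n → Tm L n → Prop
  | ax (e : Eqn L) : e ∈ A → Deriv L A e.lhs e.rhs
  | refl {n : ℕ} (t : Tm L n) : Deriv L A t t
  | symm {n : ℕ} {t u : Tm L n} : Deriv L A t u → Deriv L A u t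
  | trans {n : ℕ} {t u v : Tm L n} : Deriv L A t u → Deriv L A u v → Deriv L A t v
  | congr {n k : ℕ} (f : L k) {ts us : Fin k → Tm L n} :
      (∀ j, Deriv L A (ts j) (us j)) → Deriv L A (.op f ts) (.op f us)
  | subst {n m : ℕ} {t u : Tm L n} (θ : Fin n → Tm L m) :
      Deriv L A t u → Deriv L A (t.subst θ) (u.subst θ)
lemma Tm.countVar_subst {L : ℕ → Type} {n m : ℕ} (t : Tm L n) (θ : Fin n → Tm L m)
    (i : Fin m) : (t.subst θ).countVar i = ∑ j, t.countVar j * (θ j).countVar i := by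
  induction t with
  | var j =>
      simp only [Tm.subst, Tm.countVar, ite_mul, one_mul, zero_mul]
      rw [Finset.sum_ite_eq Finset.univ j]
      simp
  | op f ts ih =>
      simp only [Tm.subst, Tm.countVar, ih]
      rw [Finset.sum_comm]
      simp [Finset.sum_mul]

/-- a theory axiomatized by linear-regular equations is linear-regular:
every derivable equation is derivable from the linear-regular consequences of the
axioms; and linear-regular terms are closed under substitution of linear-regular
terms with disjoint variables. -/
theorem linear_regular_axioms_give_linear_regular_theory (L : ℕ → Type)
    (A : Set (Eqn L)) (hA : ∀ e ∈ A, LinReg e.lhs ∧ LinReg e.rhs) :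
    (∀ (n : ℕ) (t u : Tm L n), Deriv L A t u →
      Deriv L {e : Eqn L | Deriv L A e.lhs e.rhs ∧ LinReg e.lhs ∧ LinReg e.rhs} t u) ∧
    (∀ (k n : ℕ) (t : Tm L k) (θ : Fin k → Tm L n),
      LinReg t → (∀ i : Fin n, ∑ j, (θ j).countVar i = 1) →
      LinReg (t.subst θ)) := by
  constructor
  · intro n t u h
    induction h with
    | ax e he => exact Deriv.ax e ⟨Deriv.ax e he, hA e he⟩
    | refl t => exact Deriv.refl t
    | symm _ ih => exact Deriv.symm ih
    | trans _ _ ih1 ih2 => exact Deriv.trans ih1 ih2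
    | congr f _ ih => exact Deriv.congr f ih
    | subst θ _ ih => exact Deriv.subst θ ih
  · intro k n t θ ht hθ i
    rw [Tm.countVar_subst, Finset.sum_congr rfl (fun j _ => by rw [ht j, one_mul])]
    exact hθ i
end

section
/- The symmetric operad of analytic operations of the Lawvere theory of monoids is isomorphic to the operad of symmetries Sym: every analytic morphism n → 1 in the Lawvere theory of monoids is of the form x_1,...,x_n ↦ x_{σ(1)}·...·x_{σ(n)} for a unique σ ∈ S_n, and composition of such operations corresponds to the operadic composition in Sym. -/
/-- The Lawvere theory of monoids: morphisms `n → m` are `m`-tuples of elements of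
the free monoid (words) on `n` generators. -/
def MonLT : LawTheory where
  Hom n m := Fin m → List (Fin n)
  id n := fun i => [i]
  comp f g := fun j => (g j).flatMap f
  id_comp f := funext fun j => by
    show (f j).flatMap (fun i => [i]) = f j
    simp
  comp_id f := funext fun j => by
    show ([j] : List (Fin _)).flatMap f = f j
    simp
  assoc f g h := funext fun j => by
    show (h j).flatMap (fun b => (g b).flatMap f) = ((h j).flatMap g).flatMap f
    simp [List.flatMap_assoc]
  proj _ i := fun _ => [i]
  tuple fs := fun i => fs i 0
  tuple_proj fs i := funext fun j => by
    have : j = 0 := Subsingleton.elim _ _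
    subst this
    show ([i] : List (Fin _)).flatMap (fun i => fs i 0) = fs i 0
    simp
  tuple_eta g := funext fun i => by
    show ([i] : List (Fin _)).flatMap g = g i
    simp

/-!
A morphism `n → 1` of the theory of monoids is a word in `x₀, …, x_{n-1}`. Isomorphisms only
permute variables, so the structural morphisms are exactly the variable renamings `π_ψ`, and
lifting against `π_ψ` means splitting a word along `ψ`. A word in which every variable occurs
exactly once can be split uniquely, one block per letter, so these words are analytic.
Conversely, lifting an analytic word `w` against the diagonal `1 → m` says that every word of
length `|w|` in `m` letters is the image of `w` under exactly one renaming. For `m = |w|` and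
the word `0 1 ⋯ (|w|-1)` this forces the letters of `w` to be distinct; for `m = 2` and the
constant word it forces every variable to occur in `w`. The block structure of a composite of
such words is the lexicographic one of `finSigma`, which gives the composition of `Sym`.
-/

namespace List

theorem eq_singleton_of_flatMap_eq_singleton {α β : Type*} {f : α → List β} {l : List α}
    {b : β} (hf : ∀ a ∈ l, f a ≠ []) (h : l.flatMap f = [b]) :
    ∃ a, l = [a] ∧ f a = [b] := by
  obtain _ | ⟨a, t⟩ := l
  · simp at h
  rw [flatMap_cons, append_eq_singleton_iff] at h
  obtain ⟨hfa, -⟩ | ⟨hfa, ht⟩ := h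
  · exact absurd hfa (hf a mem_cons_self)
  obtain _ | ⟨c, t⟩ := t
  · exact ⟨a, rfl, hfa⟩
  · exact absurd ((flatMap_eq_nil_iff.1 ht) c mem_cons_self) (hf c (by simp))

theorem existsUnique_map_eq_and_flatten_ofFn_eq {α β : Type*} (ψ : β → α) :
    ∀ {n : ℕ} (us : Fin n → List α) (V : List β), V.map ψ = (ofFn us).flatten →
      ∃! W : Fin n → List β, (∀ i, (W i).map ψ = us i) ∧ (ofFn W).flatten = V
  | 0, us, V, h => by
    obtain rfl : V = [] := by simpa using h
    exact ⟨finZeroElim, ⟨finZeroElim, rfl⟩, fun _ _ => Subsingleton.elim _ _⟩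
  | n + 1, us, V, h => by
    rw [ofFn_succ, flatten_cons, map_eq_append_iff] at h
    obtain ⟨V₀, V₁, rfl, h₀, h₁⟩ := h
    obtain ⟨W₁, hW₁, huniq⟩ :=
      existsUnique_map_eq_and_flatten_ofFn_eq ψ (fun i => us i.succ) V₁ h₁
    refine ⟨Fin.cons V₀ W₁, ⟨Fin.cases h₀ hW₁.1, by simp [ofFn_succ, hW₁.2]⟩, ?_⟩
    rintro W ⟨hmap, hflat⟩
    rw [ofFn_succ, flatten_cons] at hflat
    obtain ⟨hW₀, htail⟩ :=
      append_inj hflat (by rw [← length_map ψ, hmap 0, ← h₀, length_map])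
    rw [← Fin.cons_self_tail W, huniq (Fin.tail W) ⟨fun i => hmap i.succ, htail⟩, hW₀]

theorem exists_perm_eq_ofFn {n : ℕ} {l : List (Fin n)} (hl : l.Nodup) (hmem : ∀ i, i ∈ l) :
    ∃ σ : Equiv.Perm (Fin n), l = ofFn σ := by
  let e := hl.getEquivOfForallMemList l hmem
  have hlen : l.length = n := Fin.equiv_iff_eq.1 ⟨e⟩
  refine ⟨(finCongr hlen).symm.trans e, ?_⟩
  conv_lhs => rw [← ofFn_get l, ofFn_congr hlen]
  rfl

theorem flatMap_ofFn {α β : Type*} {n : ℕ} (f : Fin n → α) (g : α → List β) :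
    (ofFn f).flatMap g = (ofFn (g ∘ f)).flatten := by
  rw [flatMap_def, map_ofFn]

end List

theorem finSigma_zero {k : ℕ} (ns : Fin (k + 1) → ℕ) (j : Fin (ns 0)) :
    finSigma ns ⟨0, j⟩ = Fin.cast (Fin.sum_univ_succ ns).symm (Fin.castAdd _ j) := by
  simp [finSigma, finSigmaSucc, finCongr]

theorem finSigma_succ {k : ℕ} (ns : Fin (k + 1) → ℕ) (i : Fin k) (j : Fin (ns i.succ)) :
    finSigma ns ⟨i.succ, j⟩ = Fin.cast (Fin.sum_univ_succ ns).symm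
      (Fin.natAdd (ns 0) (finSigma (fun t => ns t.succ) ⟨i, j⟩)) := by
  simp [finSigma, finSigmaSucc, finCongr]

theorem flatten_ofFn_ofFn_finSigma {α : Type*} : ∀ {k : ℕ} (ns : Fin k → ℕ)
    (G : (Σ i : Fin k, Fin (ns i)) → α),
    (List.ofFn fun i => List.ofFn fun j => G ⟨i, j⟩).flatten
      = List.ofFn (G ∘ (finSigma ns).symm)
  | 0, ns, G => by simp [List.ofFn_eq_nil_iff]
  | k + 1, ns, G => by
    rw [List.ofFn_succ, List.flatten_cons,
      flatten_ofFn_ofFn_finSigma (fun t => ns t.succ) (fun q => G ⟨q.1.succ, q.2⟩),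
      List.ofFn_congr (Fin.sum_univ_succ ns), List.ofFn_add]
    congr 1
    · refine congrArg List.ofFn (funext fun j => congrArg G ?_)
      rw [Equiv.eq_symm_apply, finSigma_zero]
      rfl
    · refine congrArg List.ofFn (funext fun p => congrArg G ?_)
      rw [Equiv.eq_symm_apply, finSigma_succ, Sigma.eta, Equiv.apply_symm_apply]

theorem LawTheory.structural_pi_s15 (T : LawTheory) {a b : ℕ} (φ : Fin b → Fin a) :
    T.Structural (T.pi φ) :=
  ⟨φ, T.id a, T.id b, ⟨T.id a, T.id_comp _, T.id_comp _⟩,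
    ⟨T.id b, T.id_comp _, T.id_comp _⟩, by rw [T.comp_id, T.id_comp]⟩

namespace MonLT

theorem pi_apply {a b : ℕ} (φ : Fin b → Fin a) (j : Fin b) : MonLT.pi φ j = [φ j] :=
  rfl

theorem hom_one_ext {a : ℕ} {f g : MonLT.Hom a 1} (h : f 0 = g 0) : f = g :=
  funext fun x => by rw [Subsingleton.elim x 0, h]

theorem pi_injective {a b : ℕ} : Function.Injective (MonLT.pi : (Fin b → Fin a) → _) :=
  fun _ _ h => funext fun j => List.singleton_inj.1 (congrFun h j)

theorem comp_pi {a b c : ℕ} (ψ : Fin b → Fin a) (w : MonLT.Hom b c) :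
    MonLT.comp (MonLT.pi ψ) w = fun j => (w j).map ψ :=
  funext fun _ => List.map_eq_flatMap.symm

theorem exists_perm_of_isInvertible {n : ℕ} {f : MonLT.Hom n n} (hf : MonLT.IsInvertible f) :
    ∃ σ : Equiv.Perm (Fin n), f = MonLT.pi σ := by
  obtain ⟨g, hfg, hgf⟩ := hf
  have hg : ∀ a, g a ≠ [] := fun a ha => by
    have h : (g a).flatMap f = [a] := congrFun hfg a
    rw [ha] at h
    exact List.cons_ne_nil _ _ h.symm
  choose φ hφ hgφ using fun j =>
    List.eq_singleton_of_flatMap_eq_singleton (fun a _ => hg a) (congrFun hgf j)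
  have hinj : Function.Injective φ := fun j j' h =>
    List.singleton_inj.1 ((hgφ j).symm.trans (h ▸ hgφ j'))
  exact ⟨Equiv.ofBijective φ (Finite.injective_iff_bijective.1 hinj), funext hφ⟩

theorem structural_iff {a b : ℕ} {e : MonLT.Hom a b} :
    MonLT.Structural e ↔ ∃ ψ : Fin b → Fin a, e = MonLT.pi ψ := by
  refine ⟨?_, fun ⟨ψ, he⟩ => he ▸ MonLT.structural_pi_s15 ψ⟩
  rintro ⟨φ, u, v, hu, hv, rfl⟩
  obtain ⟨α, rfl⟩ := exists_perm_of_isInvertible hu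
  obtain ⟨β, rfl⟩ := exists_perm_of_isInvertible hv
  exact ⟨α ∘ φ ∘ β, rfl⟩

theorem analytic_ofFn {n : ℕ} (σ : Equiv.Perm (Fin n)) :
    MonLT.Analytic (fun _ => List.ofFn σ : MonLT.Hom n 1) := by
  intro a b e he u v hsq
  obtain ⟨ψ, rfl⟩ := structural_iff.1 he
  rw [comp_pi] at hsq
  have hflat (w : MonLT.Hom b n) :
      MonLT.comp w (fun _ => List.ofFn σ : MonLT.Hom n 1) 0
        = (List.ofFn fun i => w (σ i)).flatten :=
    List.flatMap_ofFn _ _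
  obtain ⟨W, ⟨hWu, hWv⟩, huniq⟩ := List.existsUnique_map_eq_and_flatten_ofFn_eq ψ
    (fun i => u (σ i)) (v 0) ((congrFun hsq 0).symm.trans (List.flatMap_ofFn _ _))
  refine ⟨fun j => W (σ.symm j), ⟨?_, hom_one_ext ?_⟩, fun w ⟨hwu, hwv⟩ => ?_⟩
  · exact (comp_pi ψ _).trans (funext fun j => by simpa using hWu (σ.symm j))
  · exact (hflat _).trans (by simpa using hWv)
  · rw [comp_pi] at hwu
    have hw : (fun i => w (σ i)) = W :=
      huniq _ ⟨fun i => congrFun hwu (σ i), (hflat w).symm.trans (congrFun hwv 0)⟩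
    funext j
    simp [← hw]

theorem existsUnique_map_eq_of_analytic {n : ℕ} {f : MonLT.Hom n 1} (hf : MonLT.Analytic f)
    {m : ℕ} (v : List (Fin m)) (hv : v.length = (f 0).length) :
    ∃! g : Fin n → Fin m, (f 0).map g = v := by
  have hsq : MonLT.comp (MonLT.pi fun _ : Fin n => (0 : Fin 1)) f
      = MonLT.comp (MonLT.pi fun _ : Fin m => (0 : Fin 1)) (fun _ => v) :=
    (comp_pi _ f).trans <| (hom_one_ext (by simp [hv])).trans (comp_pi _ _).symm
  obtain ⟨w, ⟨hwu, hwv⟩, huniq⟩ := hf _ (LawTheory.structural_pi_s15 _ _) _ _ hsq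
  have hsingle (j : Fin n) : ∃ a, w j = [a] := by
    have := (congrFun ((comp_pi _ w).symm.trans hwu) j).trans (pi_apply _ j)
    exact List.length_eq_one_iff.1 (by simpa using congrArg List.length this)
  choose g hg using hsingle
  obtain rfl : w = MonLT.pi g := funext hg
  refine ⟨g, congrFun ((comp_pi g f).symm.trans hwv) 0, fun g' hg' => pi_injective ?_⟩
  exact huniq _ ⟨rfl, (comp_pi g' f).trans (hom_one_ext hg')⟩

theorem nodup_of_analytic {n : ℕ} {f : MonLT.Hom n 1} (hf : MonLT.Analytic f) :
    (f 0).Nodup := by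
  obtain ⟨g, hg, -⟩ :=
    existsUnique_map_eq_of_analytic hf (List.finRange (f 0).length) (List.length_finRange)
  exact List.Nodup.of_map g (hg ▸ List.nodup_finRange _)

theorem mem_of_analytic {n : ℕ} {f : MonLT.Hom n 1} (hf : MonLT.Analytic f) (i : Fin n) :
    i ∈ f 0 := by
  by_contra hi
  obtain ⟨g, -, huniq⟩ := existsUnique_map_eq_of_analytic hf
    (List.replicate (f 0).length (0 : Fin 2)) List.length_replicate
  have hzero (g' : Fin n → Fin 2) (hg' : ∀ j ∈ f 0, g' j = 0) : g' = g :=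
    huniq g' ((List.map_congr_left hg').trans List.map_const')
  have hupdate : Function.update (fun _ => 0) i 1 = fun _ => (0 : Fin 2) :=
    (hzero _ fun j hj => by simp [ne_of_mem_of_not_mem hj hi]).trans
      (hzero _ fun _ _ => rfl).symm
  simpa using congrFun hupdate i

theorem prodMap_ofFn_apply {k : ℕ} (ns : Fin k → ℕ) (σs : ∀ i, Equiv.Perm (Fin (ns i)))
    (i : Fin k) :
    MonLT.prodMap ns (fun i _ => List.ofFn (σs i)) i
      = List.ofFn fun r => finSigma ns ⟨i, σs i r⟩ := by
  show (List.ofFn (σs i)).flatMap (fun j => [finSigma ns ⟨i, j⟩]) = _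
  rw [← List.map_eq_flatMap, List.map_ofFn]
  rfl

theorem opComp_ofFn {k : ℕ} (ns : Fin k → ℕ) (σs : ∀ i, Equiv.Perm (Fin (ns i)))
    (τ : Equiv.Perm (Fin k)) :
    MonLT.opComp ns (fun i _ => List.ofFn (σs i)) (fun _ => List.ofFn τ)
      = fun _ => List.ofFn (symComp ns σs τ) := by
  refine hom_one_ext ?_
  calc MonLT.opComp ns (fun i _ => List.ofFn (σs i)) (fun _ => List.ofFn τ) 0
      = (List.ofFn fun t => MonLT.prodMap ns (fun i _ => List.ofFn (σs i)) (τ t)).flatten :=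
        List.flatMap_ofFn _ _
    _ = (List.ofFn fun t => List.ofFn fun r => finSigma ns ⟨τ t, σs (τ t) r⟩).flatten :=
        congrArg (fun F => (List.ofFn F).flatten) (funext fun t => prodMap_ofFn_apply ns σs (τ t))
    _ = List.ofFn ((fun q => finSigma ns ⟨τ q.1, σs (τ q.1) q.2⟩)
          ∘ (finSigma fun t => ns (τ t)).symm) :=
        flatten_ofFn_ofFn_finSigma (fun t => ns (τ t))
          fun q => finSigma ns ⟨τ q.1, σs (τ q.1) q.2⟩
    _ = List.ofFn (symComp ns σs τ) := by
        rw [List.ofFn_congr (Equiv.sum_comp τ ns)]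
        rfl

end MonLT

/-- the symmetric operad of analytic operations of the Lawvere theory of
monoids is the operad of symmetries `Sym`: the analytic morphisms `n → 1` are exactly
the words `x_{σ(1)} ⋯ x_{σ(n)}` for unique permutations `σ`, and their operadic
composition is the composition of the operad `Sym`. -/
theorem monoid_theory_operad_is_Sym :
    (∀ (n : ℕ) (f : MonLT.Hom n 1),
      MonLT.Analytic f ↔ ∃! σ : Equiv.Perm (Fin n), f = fun _ => List.ofFn ⇑σ) ∧
    (∀ (k : ℕ) (ns : Fin k → ℕ) (σs : ∀ i, Equiv.Perm (Fin (ns i)))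
        (τ : Equiv.Perm (Fin k)),
      MonLT.opComp ns (fun i => fun _ => List.ofFn ⇑(σs i)) (fun _ => List.ofFn ⇑τ)
        = fun _ => List.ofFn ⇑(symComp ns σs τ)) := by
  refine ⟨fun n f => ⟨fun hf => ?_, ?_⟩, fun k => MonLT.opComp_ofFn⟩
  · obtain ⟨σ, hσ⟩ :=
      List.exists_perm_eq_ofFn (MonLT.nodup_of_analytic hf) (MonLT.mem_of_analytic hf)
    refine ⟨σ, MonLT.hom_one_ext hσ, fun τ hτ => ?_⟩
    exact DFunLike.coe_injective (List.ofFn_injective ((congrFun hτ 0).symm.trans hσ))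
  · rintro ⟨σ, rfl, -⟩
    exact MonLT.analytic_ofFn σ
end

section
/- There are exactly two Lawvere theories in which the object 2 is initial: the terminal Lawvere theory 𝟙 (exactly one morphism between any two objects) and its subtheory obtained by removing the unique morphism 0 → 1; moreover 𝟙 is, up to isomorphism, the unique Lawvere theory that is a groupoid, and the unique one in which 0 ≅ 1. -/
/-- The terminal Lawvere theory `𝟙`: exactly one morphism between any two objects. -/
def LT1 : LawTheory where
  Hom _ _ := PUnit
  id _ := ⟨⟩
  comp _ _ := ⟨⟩
  id_comp _ := rfl
  comp_id _ := rfl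
  assoc _ _ _ := rfl
  proj _ _ := ⟨⟩
  tuple _ := ⟨⟩
  tuple_proj _ _ := rfl
  tuple_eta _ := rfl

/-- The subtheory of `𝟙` obtained by removing the morphism `0 → 1`: there is exactly
one morphism `n → m` unless `n = 0` and `m ≠ 0`, in which case there is none. -/
def LT2 : LawTheory where
  Hom n m := PLift (n = 0 → m = 0)
  id _ := ⟨fun h => h⟩
  comp f g := ⟨fun h => g.down (f.down h)⟩
  id_comp _ := Subsingleton.elim _ _
  comp_id _ := Subsingleton.elim _ _
  assoc _ _ _ := Subsingleton.elim _ _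
  proj n i := ⟨fun h => ((h ▸ i : Fin 0)).elim0⟩
  tuple {a n} fs := ⟨fun ha => by
    by_contra hn
    exact one_ne_zero ((fs ⟨0, Nat.pos_of_ne_zero hn⟩).down ha)⟩
  tuple_proj _ _ := Subsingleton.elim _ _
  tuple_eta _ := Subsingleton.elim _ _

/-- Isomorphism of Lawvere theories. -/
def IsoLT (T T' : LawTheory) : Prop :=
  ∃ (F : LawHom T T') (G : LawHom T' T),
    (∀ (a b : ℕ) (f : T.Hom a b), G.map (F.map f) = f) ∧
    (∀ (a b : ℕ) (g : T'.Hom a b), F.map (G.map g) = g)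


namespace TwoLTAux

variable (T : LawTheory)

/-- The unique morphism to `0`. -/
def toZero (a : ℕ) : T.Hom a 0 := T.tuple Fin.elim0

lemma hom_zero_subsingleton (a : ℕ) : Subsingleton (T.Hom a 0) :=
  ⟨fun f g => by
    rw [← T.tuple_eta f, ← T.tuple_eta g]
    exact congrArg T.tuple (funext fun i => i.elim0)⟩

lemma hom_subsingleton (h1 : ∀ a, Subsingleton (T.Hom a 1)) (a b : ℕ) :
    Subsingleton (T.Hom a b) :=
  ⟨fun f g => by
    rw [← T.tuple_eta f, ← T.tuple_eta g]
    exact congrArg T.tuple (funext fun i => (h1 a).elim _ _)⟩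

lemma unary_subsingleton (h : ∀ f g : T.Hom 2 1, f = g) (a : ℕ) :
    Subsingleton (T.Hom a 1) :=
  ⟨fun f g => by
    have h0 := T.tuple_proj ![f, g] 0
    have h1 := T.tuple_proj ![f, g] 1
    simp only [Matrix.cons_val_zero, Matrix.cons_val_one, Matrix.head_cons] at h0 h1
    calc f = T.comp (T.tuple ![f, g]) (T.proj 2 0) := h0.symm
      _ = T.comp (T.tuple ![f, g]) (T.proj 2 1) := by
            rw [h (T.proj 2 0) (T.proj 2 1)]
      _ = g := h1⟩

lemma unary_nonempty (f0 : T.Hom 0 1) : ∀ a, Nonempty (T.Hom a 1)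
  | 0 => ⟨f0⟩
  | a + 1 => ⟨T.proj (a + 1) 0⟩

lemma hom_nonempty (f0 : T.Hom 0 1) (a b : ℕ) : Nonempty (T.Hom a b) :=
  ⟨T.tuple fun _ => (unary_nonempty T f0 a).some⟩

lemma iso_LT1 (hs : ∀ a b, Subsingleton (T.Hom a b))
    (hn : ∀ a b, Nonempty (T.Hom a b)) : IsoLT T LT1 := by
  refine ⟨⟨fun _ => ⟨⟩, fun _ => rfl, fun _ _ => rfl, fun _ _ => rfl⟩,
    ⟨fun {a b} _ => (hn a b).some, ?_, ?_, ?_⟩, ?_, ?_⟩ <;>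
    intros <;> first | exact (hs _ _).elim _ _ | rfl

lemma LT2_sub (a b : ℕ) : Subsingleton (LT2.Hom a b) :=
  ⟨fun x y => by cases x; cases y; rfl⟩

lemma iso_LT2 (hs : ∀ a b, Subsingleton (T.Hom a b)) (h0 : IsEmpty (T.Hom 0 1)) :
    IsoLT T LT2 := by
  have key : ∀ {a b : ℕ}, T.Hom a b → a = 0 → b = 0 := by
    intro a b f ha
    by_contra hb
    subst ha
    exact h0.false (T.comp f (T.proj b ⟨0, Nat.pos_of_ne_zero hb⟩))
  refine ⟨⟨fun f => ⟨key f⟩, ?_, ?_, ?_⟩,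
    ⟨fun {a b} g => T.tuple (fun i => T.proj a
        ⟨0, Nat.pos_of_ne_zero (fun ha => ((g.down ha ▸ i : Fin 0)).elim0)⟩),
      ?_, ?_, ?_⟩, ?_, ?_⟩ <;>
    intros <;>
    first
      | exact (hs _ _).elim _ _
      | exact (LT2_sub _ _).elim _ _

lemma of_iso_LT1 (h : IsoLT T LT1) :
    (∀ a b, Subsingleton (T.Hom a b)) ∧ (∀ a b, Nonempty (T.Hom a b)) := by
  obtain ⟨F, G, hGF, _⟩ := h
  refine ⟨fun a b => ⟨fun f g => ?_⟩, fun a b => ⟨G.map (⟨⟩ : LT1.Hom a b)⟩⟩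
  rw [← hGF a b f, ← hGF a b g]
  rfl

lemma iso01 (f : T.Hom 0 1) (g : T.Hom 1 0) (hgf : T.comp g f = T.id 1) :
    IsoLT T LT1 := by
  have hz := hom_zero_subsingleton T
  have h1 : ∀ a, Subsingleton (T.Hom a 1) := fun a =>
    ⟨fun u v => by
      have hu : u = T.comp (T.comp u g) f := by rw [T.assoc, hgf, T.comp_id]
      have hv : v = T.comp (T.comp v g) f := by rw [T.assoc, hgf, T.comp_id]
      rw [hu, hv, (hz a).elim (T.comp u g) (T.comp v g)]⟩
  exact iso_LT1 T (hom_subsingleton T h1) (hom_nonempty T f)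

end TwoLTAux

/-- there are exactly two Lawvere theories in which the object `2` is
initial, namely the terminal theory `𝟙` and its subtheory without the morphism
`0 → 1`; moreover `𝟙` is, up to isomorphism, the unique Lawvere theory that is a
groupoid, and the unique one in which `0 ≅ 1`. -/
theorem two_lawvere_theories_with_two_initial :
    (∀ T : LawTheory, (∀ m : ℕ, Nonempty (Unique (T.Hom 2 m))) →
      IsoLT T LT1 ∨ IsoLT T LT2) ∧
    (∀ m : ℕ, Nonempty (Unique (LT1.Hom 2 m))) ∧
    (∀ m : ℕ, Nonempty (Unique (LT2.Hom 2 m))) ∧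
    ¬ IsoLT LT1 LT2 ∧
    (∀ T : LawTheory,
      (∀ (a b : ℕ) (f : T.Hom a b), T.IsInvertible f) ↔ IsoLT T LT1) ∧
    (∀ T : LawTheory,
      (∃ (f : T.Hom 0 1) (g : T.Hom 1 0),
        T.comp f g = T.id 0 ∧ T.comp g f = T.id 1) ↔ IsoLT T LT1) := by
  open TwoLTAux in
  refine ⟨?_, ?_, ?_, ?_, ?_, ?_⟩
  · intro T h
    have h21 : ∀ f g : T.Hom 2 1, f = g := fun f g =>
      ((h 1).some.uniq f).trans ((h 1).some.uniq g).symm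
    have hs := hom_subsingleton T (unary_subsingleton T h21)
    by_cases h0 : Nonempty (T.Hom 0 1)
    · exact Or.inl (iso_LT1 T hs (hom_nonempty T h0.some))
    · exact Or.inr (iso_LT2 T hs (not_nonempty_iff.mp h0))
  · exact fun m => ⟨⟨⟨⟨⟩⟩, fun _ => rfl⟩⟩
  · exact fun m => ⟨⟨⟨⟨fun h => (Nat.succ_ne_zero 1 h).elim⟩⟩,
      fun x => by cases x; rfl⟩⟩
  · rintro ⟨F, G, -, -⟩
    exact one_ne_zero ((F.map (⟨⟩ : LT1.Hom 0 1)).down rfl)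
  · intro T
    constructor
    · intro hinv
      obtain ⟨g, hg1, hg2⟩ := hinv 1 0 (toZero T 1)
      exact iso01 T g (toZero T 1) hg1
    · intro h
      obtain ⟨hs, hn⟩ := of_iso_LT1 T h
      intro a b f
      exact ⟨(hn b a).some, (hs a a).elim _ _, (hs b b).elim _ _⟩
  · intro T
    constructor
    · rintro ⟨f, g, -, hgf⟩
      exact iso01 T f g hgf
    · intro h
      obtain ⟨hs, hn⟩ := of_iso_LT1 T h
      exact ⟨(hn 0 1).some, (hn 1 0).some, (hs 0 0).elim _ _, (hs 1 1).elim _ _⟩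
end
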